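/- Let (D_t) = (𝔸_{r(t)}) be a canonical domain system of order d ∈ [1,+∞] and (φ_{s,t}) an evolution family of order d over (D_t). Then for every s ≥ 0 and every sequence (t_n) ⊂ [s,∞), the sequence ψ_n := φ_{s,t_n} has a subsequence converging uniformly on compact subsets of D_s either to a constant or to an injective holomorphic function ψ : D_s → 𝔻* satisfying I(ψ∘γ) = I(γ) for every closed curve γ ⊂ D_s. -/

import Mathlib

open MeasureTheory Set Filter Metric
open scoped ENNReal NNReal Topology

noncomputable section

/-- The annulus `𝔸_r = {z : r < |z| < 1}`.  For `r = 0` this is the punctured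
unit disk `𝔻*`. -/
def stdAnnulus (r : ℝ) : Set ℂ := {z : ℂ | r < ‖z‖ ∧ ‖z‖ < 1}

/-- The exterior of the closed unit disk, `ℂ ∖ cl 𝔻`. -/
def extDisk : Set ℂ := {z : ℂ | 1 < ‖z‖}

/-- The punctured plane `ℂ* = ℂ ∖ {0}`. -/
def punctPlane : Set ℂ := {z : ℂ | z ≠ 0}

/-- `ω(r) = -π / log r` for `r ∈ (0,1)`, and `ω(0) = 0`. -/
def omegaFun (r : ℝ) : ℝ := if r = 0 then 0 else -Real.pi / Real.log r

/-- `f ∈ AC^d([0,∞))`: `f` is locally absolutely continuous on `[0,∞)` with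
(a.e.) derivative of class `L^d_loc`; the derivative is represented by a
function `g` via the fundamental theorem of calculus. -/
def ACd (d : ℝ≥0∞) (f : ℝ → ℝ) : Prop :=
  ∃ g : ℝ → ℝ,
    (∀ T : ℝ, 0 < T → MemLp g d (volume.restrict (Icc (0:ℝ) T))) ∧
    ∀ a b : ℝ, 0 ≤ a → a ≤ b → f b - f a = ∫ t in a..b, g t

/-- A (doubly connected) canonical domain system of order `d`: a family of
annuli `D_t = 𝔸_{r t}` such that `t ↦ ω(r t)` is non-increasing and of class
`AC^d` on `[0,∞)`. -/
structure CanonicalDomainSystem (d : ℝ≥0∞) where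
  r : ℝ → ℝ
  r_nonneg : ∀ t : ℝ, 0 ≤ t → 0 ≤ r t
  r_lt_one : ∀ t : ℝ, 0 ≤ t → r t < 1
  omega_anti : ∀ ⦃s t : ℝ⦄, 0 ≤ s → s ≤ t → omegaFun (r t) ≤ omegaFun (r s)
  omega_ACd : ACd d fun t => omegaFun (r t)

/-- A Loewner chain of order `d` over the canonical domain system `D`. -/
structure IsLoewnerChain (d : ℝ≥0∞) (D : CanonicalDomainSystem d) (f : ℝ → ℂ → ℂ) : Prop where
  holo : ∀ t : ℝ, 0 ≤ t → DifferentiableOn ℂ (f t) (stdAnnulus (D.r t))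
  inj : ∀ t : ℝ, 0 ≤ t → InjOn (f t) (stdAnnulus (D.r t))
  mono : ∀ ⦃s t : ℝ⦄, 0 ≤ s → s ≤ t →
    f s '' stdAnnulus (D.r s) ⊆ f t '' stdAnnulus (D.r t)
  lc3 : ∀ S T : ℝ, 0 ≤ S → S ≤ T → ∀ K : Set ℂ, IsCompact K → K ⊆ stdAnnulus (D.r S) →
    ∃ k : ℝ → ℝ, (∀ x, 0 ≤ k x) ∧ MemLp k d (volume.restrict (Icc S T)) ∧
      ∀ z ∈ K, ∀ s t : ℝ, S ≤ s → s ≤ t → t ≤ T →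
        ‖f s z - f t z‖ ≤ ∫ ξ in s..t, k ξ

/-- An evolution family of order `d` over the canonical domain system `D`. -/
structure IsEvolutionFamily (d : ℝ≥0∞) (D : CanonicalDomainSystem d)
    (φ : ℝ → ℝ → ℂ → ℂ) : Prop where
  holo : ∀ ⦃s t : ℝ⦄, 0 ≤ s → s ≤ t → DifferentiableOn ℂ (φ s t) (stdAnnulus (D.r s))
  mapsTo : ∀ ⦃s t : ℝ⦄, 0 ≤ s → s ≤ t →
    MapsTo (φ s t) (stdAnnulus (D.r s)) (stdAnnulus (D.r t))
  ef1 : ∀ s : ℝ, 0 ≤ s → ∀ z ∈ stdAnnulus (D.r s), φ s s z = z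
  ef2 : ∀ ⦃s u t : ℝ⦄, 0 ≤ s → s ≤ u → u ≤ t → ∀ z ∈ stdAnnulus (D.r s),
    φ s t z = φ u t (φ s u z)
  ef3 : ∀ S T : ℝ, 0 ≤ S → S ≤ T → ∀ z ∈ stdAnnulus (D.r S),
    ∃ k : ℝ → ℝ, (∀ x, 0 ≤ k x) ∧ MemLp k d (volume.restrict (Icc S T)) ∧
      ∀ s u t : ℝ, S ≤ s → s ≤ u → u ≤ t → t ≤ T →
        ‖φ s u z - φ s t z‖ ≤ ∫ ξ in u..t, k ξ

/-- The domain `𝒟 = {(z,t) : t ≥ 0, z ∈ D_t}` of a weak holomorphic vector field. -/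
def vfDomain {d : ℝ≥0∞} (D : CanonicalDomainSystem d) : Set (ℂ × ℝ) :=
  {p : ℂ × ℝ | 0 ≤ p.2 ∧ p.1 ∈ stdAnnulus (D.r p.2)}

/-- A weak holomorphic vector field of order `d` over `D` (we regard `G` as a
function of `(z, t)` written `G z t`). -/
structure IsWeakHolVF (d : ℝ≥0∞) (D : CanonicalDomainSystem d) (G : ℂ → ℝ → ℂ) : Prop where
  meas : ∀ z : ℂ, Measurable fun t : {t : ℝ // 0 ≤ t ∧ z ∈ stdAnnulus (D.r t)} => G z t.1
  holo : ∀ t : ℝ, 0 ≤ t → DifferentiableOn ℂ (fun z => G z t) (stdAnnulus (D.r t))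
  bound : ∀ K : Set (ℂ × ℝ), IsCompact K → K ⊆ vfDomain D →
    ∃ k : ℝ → ℝ, (∀ x, 0 ≤ k x) ∧ MemLp k d (volume.restrict (Prod.snd '' K)) ∧
      ∀ p ∈ K, ‖G p.1 p.2‖ ≤ k p.2

/-- `G` is semicomplete: for every initial condition the Carathéodory initial
value problem (in integral form) has a solution defined on all of `[s,∞)`. -/
def IsSemicomplete {d : ℝ≥0∞} (D : CanonicalDomainSystem d) (G : ℂ → ℝ → ℂ) : Prop :=
  ∀ s : ℝ, 0 ≤ s → ∀ z ∈ stdAnnulus (D.r s),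
    ∃ w : ℝ → ℂ, w s = z ∧ (∀ t : ℝ, s ≤ t → w t ∈ stdAnnulus (D.r t)) ∧
      ∀ t : ℝ, s ≤ t → w t = z + ∫ ξ in s..t, G (w ξ) ξ

/-- `γ` is a closed curve (parametrized by `[0,1]`) contained in `A`. -/
def IsClosedCurveIn (γ : ℝ → ℂ) (A : Set ℂ) : Prop :=
  ContinuousOn γ (Icc 0 1) ∧ γ 0 = γ 1 ∧ ∀ t ∈ Icc (0:ℝ) 1, γ t ∈ A

/-- The closed curve `γ` has index (winding number) `n` about the point `w`,
expressed via a continuous logarithm of `γ - w`. -/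
def HasWindingNumber (γ : ℝ → ℂ) (w : ℂ) (n : ℤ) : Prop :=
  ∃ g : ℝ → ℂ, ContinuousOn g (Icc 0 1) ∧
    (∀ t ∈ Icc (0:ℝ) 1, γ t - w = Complex.exp (g t)) ∧
    g 1 - g 0 = 2 * Real.pi * Complex.I * n

/-- `I(f ∘ γ) = I(γ)` for every closed curve `γ` in `A`: `f` preserves the
index about the origin of closed curves in `A`. -/
def PreservesWinding (f : ℂ → ℂ) (A : Set ℂ) : Prop :=
  ∀ γ : ℝ → ℂ, IsClosedCurveIn γ A → ∀ n : ℤ,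
    (HasWindingNumber γ 0 n ↔ HasWindingNumber (fun t => f (γ t)) 0 n)

/-- The Loewner chain `f` is associated with the evolution family `φ`:
`f_s = f_t ∘ φ_{s,t}`. -/
def AssociatedLC {d : ℝ≥0∞} (D : CanonicalDomainSystem d) (f : ℝ → ℂ → ℂ)
    (φ : ℝ → ℝ → ℂ → ℂ) : Prop :=
  ∀ s t : ℝ, 0 ≤ s → s ≤ t → ∀ z ∈ stdAnnulus (D.r s), f s z = f t (φ s t z)

/-- The union `⋃_{t ≥ 0} f_t(D_t)` of the ranges of a Loewner chain. -/
def chainUnion {d : ℝ≥0∞} (D : CanonicalDomainSystem d) (f : ℝ → ℂ → ℂ) : Set ℂ :=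
  ⋃ t ∈ Ici (0:ℝ), f t '' stdAnnulus (D.r t)

/-- The evolution family `φ` has Loewner range `Ω`, i.e. there is an associated
Loewner chain, preserving winding numbers, whose union of ranges is `Ω`.
(Taking `Ω = 𝔸_ρ`, `𝔻*`, `ℂ ∖ cl 𝔻`, `ℂ*`, this defines the conformal types
I, II, III, IV respectively.) -/
def HasConformalType {d : ℝ≥0∞} (D : CanonicalDomainSystem d) (φ : ℝ → ℝ → ℂ → ℂ)
    (Ω : Set ℂ) : Prop :=
  ∃ f : ℝ → ℂ → ℂ, IsLoewnerChain d D f ∧ AssociatedLC D f φ ∧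
    (∀ t : ℝ, 0 ≤ t → PreservesWinding (f t) (stdAnnulus (D.r t))) ∧
    chainUnion D f = Ω

/-- `φ s t → 0` as `t → +∞`, uniformly on compact subsets of `D_s`. -/
def ConvergesToZeroOnCompacta {d : ℝ≥0∞} (D : CanonicalDomainSystem d)
    (φ : ℝ → ℝ → ℂ → ℂ) (s : ℝ) : Prop :=
  ∀ K : Set ℂ, IsCompact K → K ⊆ stdAnnulus (D.r s) →
    TendstoUniformlyOn (fun t z => φ s t z) (fun _ => 0) atTop K

/-- `N(f)`: the free term of the Laurent expansion of `f`, holomorphic on the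
annulus `𝔸_r`, computed as a mean value over the circle of radius `(1+r)/2`. -/
def freeTerm (r : ℝ) (f : ℂ → ℂ) : ℂ :=
  (2 * Real.pi : ℂ)⁻¹ *
    ∫ θ in (0:ℝ)..(2 * Real.pi), f ((((1 + r) / 2 : ℝ) : ℂ) * Complex.exp (θ * Complex.I))

/-- The Villat kernel `K_r`. -/
def villatKernel (r : ℝ) (z : ℂ) : ℂ :=
  (1 + z) / (1 - z) +
    ∑' ν : ℕ,
      ((1 + (r : ℂ) ^ (2 * (ν + 1)) * z) / (1 - (r : ℂ) ^ (2 * (ν + 1)) * z) +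
        (1 + z / (r : ℂ) ^ (2 * (ν + 1))) / (1 - z / (r : ℂ) ^ (2 * (ν + 1))))

/-- The class `V_r`: for `r ∈ (0,1)`, holomorphic functions on `𝔸_r` given by
the Villat-kernel representation with a pair of positive Borel measures on the
unit circle of total mass one; for `r = 0`, the (normalized) Carathéodory class
on the unit disk. -/
def MemClassV (r : ℝ) (p : ℂ → ℂ) : Prop :=
  (r = 0 →
    DifferentiableOn ℂ p (ball (0:ℂ) 1) ∧ p 0 = 1 ∧ ∀ z ∈ ball (0:ℂ) 1, 0 < (p z).re) ∧
  (r ≠ 0 →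
    DifferentiableOn ℂ p (stdAnnulus r) ∧
    ∃ μ₁ μ₂ : Measure ℂ,
      μ₁ {ξ : ℂ | ‖ξ‖ ≠ 1} = 0 ∧ μ₂ {ξ : ℂ | ‖ξ‖ ≠ 1} = 0 ∧
      μ₁ univ + μ₂ univ = 1 ∧
      ∀ z ∈ stdAnnulus r,
        p z = (∫ ξ, villatKernel r (z / ξ) ∂μ₁) +
          ∫ ξ, (1 - villatKernel r ((r : ℂ) * ξ / z)) ∂μ₂)

/-!
By Montel's theorem the maps `φ_{s,t_n} : D_s → 𝔻*` have a locally uniformly convergent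
subsequence. If the limit `ψ` is not constant, Hurwitz's theorem passes to `ψ` what the
approximants have: they omit `0` and are injective, and the maximum principle keeps `ψ` inside
the open disk.

Injectivity of `φ_{s,t}` is a first-coincidence argument: if the orbits of `z₁ ≠ z₂` first meet at
time `c > s`, then for `u` slightly below `c` the map `φ_{u,c}`, which is uniformly close to the
identity near the meeting point, would identify the two distinct points `φ_{s,u} z₁`, `φ_{s,u} z₂`.

Winding numbers about `0` are locally constant under uniform perturbations smaller than the
distance to `0`. The curve `φ_{s,t} ∘ γ` depends uniformly continuously on `t`, so its index
equals `I(γ)`, and since `ψ` does not vanish, the index survives the limit `ψ ∘ γ`.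
-/

section Annulus

theorem isOpen_stdAnnulus (r : ℝ) : IsOpen (stdAnnulus r) :=
  (isOpen_lt continuous_const continuous_norm).inter (isOpen_lt continuous_norm continuous_const)

theorem stdAnnulus_anti {r r' : ℝ} (h : r' ≤ r) : stdAnnulus r ⊆ stdAnnulus r' :=
  fun _ hz => ⟨h.trans_lt hz.1, hz.2⟩

theorem ne_zero_of_mem_stdAnnulus {r : ℝ} (hr : 0 ≤ r) {z : ℂ} (hz : z ∈ stdAnnulus r) :
    z ≠ 0 :=
  norm_pos_iff.mp (hr.trans_lt hz.1)

theorem ball_subset_stdAnnulus {r R : ℝ} {w : ℂ} (h₁ : r + R ≤ ‖w‖) (h₂ : ‖w‖ + R ≤ 1) :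
    ball w R ⊆ stdAnnulus r := by
  intro z hz
  have := abs_le.mp (abs_norm_sub_norm_le z w)
  rw [mem_ball, dist_eq_norm] at hz
  exact ⟨by linarith, by linarith⟩

theorem isPreconnected_stdAnnulus {r : ℝ} (hr : 0 ≤ r) : IsPreconnected (stdAnnulus r) := by
  have polar : stdAnnulus r =
      (fun p : ℝ × ℝ => (p.1 : ℂ) * Complex.exp (p.2 * Complex.I)) '' (Ioo r 1 ×ˢ univ) := by
    ext z
    constructor
    · exact fun hz => ⟨(‖z‖, z.arg), ⟨hz, trivial⟩, Complex.norm_mul_exp_arg_mul_I z⟩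
    · rintro ⟨⟨ρ, θ⟩, ⟨hρ, -⟩, rfl⟩
      have : ‖(ρ : ℂ) * Complex.exp (θ * Complex.I)‖ = ρ := by
        rw [norm_mul, Complex.norm_exp_ofReal_mul_I, mul_one, Complex.norm_real,
          Real.norm_of_nonneg (hr.trans hρ.1.le)]
      show r < _ ∧ _ < 1
      rwa [this]
  rw [polar]
  exact (isPreconnected_Ioo.prod isPreconnected_univ).image _ (by fun_prop)

end Annulus

theorem omegaFun_strictMonoOn : StrictMonoOn omegaFun (Ico 0 1) := by
  have pos : ∀ b ∈ Ioo (0 : ℝ) 1, omegaFun b = Real.pi / -Real.log b := fun b hb => by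
    rw [omegaFun, if_neg hb.1.ne', div_neg, neg_div]
  rintro a ⟨ha, -⟩ b ⟨-, hb⟩ hab
  have hb' : b ∈ Ioo (0 : ℝ) 1 := ⟨ha.trans_lt hab, hb⟩
  have hlogb := Real.log_neg hb'.1 hb
  rw [pos b hb']
  rcases ha.eq_or_lt with rfl | ha
  · rw [omegaFun, if_pos rfl]
    exact div_pos Real.pi_pos (neg_pos.mpr hlogb)
  · rw [pos a ⟨ha, hab.trans hb⟩]
    exact div_lt_div_of_pos_left Real.pi_pos (neg_pos.mpr hlogb)
      (neg_lt_neg (Real.log_lt_log ha hab))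

section TimeRegularity

theorem MeasureTheory.MemLp.integrableOn_Icc {d : ℝ≥0∞} (hd : 1 ≤ d) {k : ℝ → ℝ} {a b : ℝ}
    (hk : MemLp k d (volume.restrict (Icc a b))) : IntegrableOn k (Icc a b) :=
  haveI : IsFiniteMeasure (volume.restrict (Icc a b)) := by
    rw [isFiniteMeasure_restrict]; exact measure_Icc_lt_top.ne
  hk.integrable hd

theorem continuousOn_Ici_of_forall_Icc {X : Type*} [TopologicalSpace X] {f : ℝ → X} {a : ℝ}
    (hf : ∀ T, ContinuousOn f (Icc a T)) : ContinuousOn f (Ici a) := fun c hc =>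
  (hf (c + 1) c ⟨hc, by linarith⟩).mono_of_mem_nhdsWithin <| by
    rw [← Ici_inter_Iic]
    exact inter_mem_nhdsWithin _ (Iic_mem_nhds (by linarith))

theorem continuousOn_of_dist_le_integral {X : Type*} [PseudoMetricSpace X] {f : ℝ → X}
    {k : ℝ → ℝ} {a b : ℝ} (hk : IntegrableOn k (Icc a b))
    (hf : ∀ u ∈ Icc a b, ∀ v ∈ Icc a b, u ≤ v → dist (f u) (f v) ≤ ∫ x in u..v, k x) :
    ContinuousOn f (Icc a b) := by
  rcases lt_or_ge b a with hba | hab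
  · simp [Icc_eq_empty_of_lt hba]
  set G : ℝ → ℝ := fun x => ∫ t in a..x, k t
  have hG : ContinuousOn G (Icc a b) := by
    have := intervalIntegral.continuousOn_primitive_interval (f := k) (μ := volume)
      (by rwa [uIcc_of_le hab])
    rwa [uIcc_of_le hab] at this
  have hint : ∀ x ∈ Icc a b, IntervalIntegrable k volume a x := fun x hx =>
    (hk.mono_set (by rw [uIcc_of_le hx.1]; exact Icc_subset_Icc_right hx.2)).intervalIntegrable
  have hdist : ∀ u ∈ Icc a b, ∀ v ∈ Icc a b, dist (f u) (f v) ≤ dist (G u) (G v) := by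
    intro u hu v hv
    wlog huv : u ≤ v generalizing u v
    · rw [dist_comm, dist_comm (G u)]; exact this v hv u hu (le_of_not_ge huv)
    rw [Real.dist_eq, abs_sub_comm, intervalIntegral.integral_interval_sub_left (hint v hv)
      (hint u hu)]
    exact (hf u hu v hv huv).trans (le_abs_self _)
  intro c hc
  rw [ContinuousWithinAt, tendsto_iff_dist_tendsto_zero]
  have hGc : Tendsto (fun x => dist (G x) (G c)) (𝓝[Icc a b] c) (𝓝 0) :=
    (tendsto_iff_dist_tendsto_zero.mp (hG c hc))
  exact squeeze_zero' (Eventually.of_forall fun _ => dist_nonneg)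
    (eventually_nhdsWithin_of_forall fun x hx => hdist x hx c hc) hGc

theorem ACd.continuousOn {d : ℝ≥0∞} (hd : 1 ≤ d) {f : ℝ → ℝ} (hf : ACd d f) :
    ContinuousOn f (Ici 0) := by
  obtain ⟨g, hg, hfg⟩ := hf
  refine continuousOn_Ici_of_forall_Icc fun T => ?_
  rcases le_or_gt T 0 with hT | hT
  · exact (subsingleton_Icc_of_ge hT).continuousOn (f := f)
  refine continuousOn_of_dist_le_integral ((hg T hT).integrableOn_Icc hd).abs
    fun u hu v _ huv => ?_
  rw [Real.dist_eq, abs_sub_comm, hfg u v hu.1 huv]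
  exact intervalIntegral.abs_integral_le_integral_abs huv

end TimeRegularity

namespace CanonicalDomainSystem

variable {d : ℝ≥0∞} (D : CanonicalDomainSystem d)

theorem r_antitone {a b : ℝ} (ha : 0 ≤ a) (hab : a ≤ b) : D.r b ≤ D.r a :=
  (omegaFun_strictMonoOn.le_iff_le ⟨D.r_nonneg b (ha.trans hab), D.r_lt_one b (ha.trans hab)⟩
    ⟨D.r_nonneg a ha, D.r_lt_one a ha⟩).mp (D.omega_anti ha hab)

theorem stdAnnulus_subset {a b : ℝ} (ha : 0 ≤ a) (hab : a ≤ b) :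
    stdAnnulus (D.r a) ⊆ stdAnnulus (D.r b) :=
  stdAnnulus_anti (D.r_antitone ha hab)

theorem eventually_r_lt (hd : 1 ≤ d) {c : ℝ} (hc : 0 ≤ c) {ε : ℝ} (hε : 0 < ε) :
    ∀ᶠ u in 𝓝[Ici 0] c, D.r u < D.r c + ε := by
  have hpos : ∀ᶠ u in 𝓝[Ici 0] c, 0 ≤ u := self_mem_nhdsWithin
  rcases le_or_gt 1 (D.r c + ε) with h | h
  · exact hpos.mono fun u hu => (D.r_lt_one u hu).trans_le h
  have hmem : ∀ {u}, 0 ≤ u → D.r u ∈ Ico (0 : ℝ) 1 := fun hu => ⟨D.r_nonneg _ hu, D.r_lt_one _ hu⟩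
  have hcε : D.r c + ε ∈ Ico (0 : ℝ) 1 := ⟨by linarith [D.r_nonneg c hc], h⟩
  have hω : omegaFun (D.r c) < omegaFun (D.r c + ε) :=
    omegaFun_strictMonoOn (hmem hc) hcε (by linarith)
  filter_upwards [hpos, (D.omega_ACd.continuousOn hd c hc).eventually (gt_mem_nhds hω)]
    with u hu hωu
  exact (omegaFun_strictMonoOn.lt_iff_lt (hmem hu) hcε).mp hωu

theorem exists_ball_subset (hd : 1 ≤ d) {c : ℝ} (hc : 0 ≤ c) {w : ℂ}
    (hw : w ∈ stdAnnulus (D.r c)) :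
    ∃ R > 0, ∀ᶠ u in 𝓝[Ici 0] c, ball w R ⊆ stdAnnulus (D.r u) := by
  set R := min ((‖w‖ - D.r c) / 2) (1 - ‖w‖)
  have hR : 0 < R := lt_min (by linarith [hw.1]) (by linarith [hw.2])
  refine ⟨R, hR, (D.eventually_r_lt hd hc hR).mono fun u hu => ball_subset_stdAnnulus ?_ ?_⟩
  · linarith [min_le_left ((‖w‖ - D.r c) / 2) (1 - ‖w‖)]
  · linarith [min_le_right ((‖w‖ - D.r c) / 2) (1 - ‖w‖)]

end CanonicalDomainSystem

section UniformLimits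

theorem dist_le_of_norm_le_of_ball_subset {f : ℂ → ℂ} {U : Set ℂ} {M R : ℝ} {y z : ℂ}
    (hf : DifferentiableOn ℂ f U) (hM : ∀ x ∈ U, ‖f x‖ ≤ M) (hzU : ball z R ⊆ U)
    (hy : y ∈ ball z R) : dist (f y) (f z) ≤ 2 * M / R * dist y z := by
  have hz : z ∈ U := hzU (mem_ball_self (dist_nonneg.trans_lt hy))
  refine Complex.dist_le_div_mul_dist_of_mapsTo_ball (hf.mono hzU) (fun x hx => ?_) hy
  rw [mem_closedBall, two_mul]
  exact (dist_le_norm_add_norm _ _).trans (add_le_add (hM x (hzU hx)) (hM z hz))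

theorem tendstoUniformlyOn_of_tendsto_of_lipschitz {X Y ι : Type*} [PseudoMetricSpace X]
    [PseudoMetricSpace Y] {l : Filter ι} {K : Set X} (hK : IsCompact K) {F : ι → X → Y}
    {f : X → Y} {R L : ℝ} (hR : 0 < R)
    (hF : ∀ᶠ i in l, ∀ y ∈ K, ∀ z ∈ K, dist y z < R → dist (F i y) (F i z) ≤ L * dist y z)
    (hlim : ∀ z ∈ K, Tendsto (F · z) l (𝓝 (f z))) : TendstoUniformlyOn F f l K := by
  rcases l.eq_or_neBot with rfl | _
  · exact fun _ _ => eventually_bot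
  have hf : ∀ y ∈ K, ∀ z ∈ K, dist y z < R → dist (f y) (f z) ≤ L * dist y z :=
    fun y hy z hz hyz => le_of_tendsto ((hlim y hy).dist (hlim z hz))
      (hF.mono fun i hi => hi y hy z hz hyz)
  rw [Metric.tendstoUniformlyOn_iff]
  intro ε hε
  set η := min R (ε / (4 * (|L| + 1)))
  have hη : 0 < η := lt_min hR (by positivity)
  have hLη : |L| * η < ε / 4 := by
    have : η ≤ ε / (4 * (|L| + 1)) := min_le_right _ _
    calc |L| * η ≤ |L| * (ε / (4 * (|L| + 1))) := by gcongr
      _ < (|L| + 1) * (ε / (4 * (|L| + 1))) := by gcongr; linarith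
      _ = ε / 4 := by field_simp
  have hsmall : ∀ y z : X, dist y z < η → L * dist y z ≤ ε / 4 := fun y z h =>
    calc L * dist y z ≤ |L| * dist y z := by gcongr; exact le_abs_self L
      _ ≤ |L| * η := by gcongr
      _ ≤ ε / 4 := hLη.le
  obtain ⟨t, htK, hKt⟩ := hK.elim_nhds_subcover (fun p => ball p η)
    fun p _ => ball_mem_nhds p hη
  have hnet : ∀ᶠ i in l, ∀ p ∈ t, dist (f p) (F i p) < ε / 4 :=
    (eventually_all_finset t).mpr fun p hp =>
      ((hlim p (htK p hp)).eventually (ball_mem_nhds _ (by positivity : 0 < ε / 4))).mono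
        fun i hi => by rwa [dist_comm]
  filter_upwards [hF, hnet] with i hFi hneti z hz
  obtain ⟨p, hp, hzp⟩ : ∃ p ∈ t, dist z p < η := by simpa using hKt hz
  have hzpR : dist z p < R := hzp.trans_le (min_le_left _ _)
  have hpzR : dist p z < R := by rwa [dist_comm]
  calc dist (f z) (F i z) ≤ dist (f z) (f p) + dist (f p) (F i p) + dist (F i p) (F i z) :=
        dist_triangle4 _ _ _ _
    _ ≤ ε / 4 + ε / 4 + ε / 4 := by
        gcongr
        · exact (hf z hz p (htK p hp) hzpR).trans (hsmall z p hzp)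
        · exact (hneti p hp).le
        · exact (hFi p (htK p hp) z hz hpzR).trans (hsmall p z (by rwa [dist_comm]))
    _ < ε := by linarith

theorem tendstoUniformlyOn_of_tendsto_of_norm_le {ι : Type*} {l : Filter ι} {U K : Set ℂ}
    (hU : IsOpen U) (hK : IsCompact K) (hKU : K ⊆ U) {F : ι → ℂ → ℂ} {f : ℂ → ℂ} {M : ℝ}
    (hF : ∀ᶠ i in l, DifferentiableOn ℂ (F i) U ∧ ∀ z ∈ U, ‖F i z‖ ≤ M)
    (hlim : ∀ z ∈ K, Tendsto (F · z) l (𝓝 (f z))) : TendstoUniformlyOn F f l K := by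
  obtain ⟨R, hR, hRU⟩ := hK.exists_thickening_subset_open hU hKU
  refine tendstoUniformlyOn_of_tendsto_of_lipschitz (L := 2 * M / R) hK hR
    (hF.mono fun i ⟨hdi, hMi⟩ y _ z hz hyz => ?_) hlim
  exact dist_le_of_norm_le_of_ball_subset hdi hMi ((ball_subset_thickening hz R).trans hRU)
    (mem_ball.mpr hyz)

end UniformLimits

section Montel

theorem exists_strictMono_forall_tendsto {M : ℝ} (G : ℕ → ℕ → ℂ) (hG : ∀ n j, ‖G n j‖ ≤ M) :
    ∃ σ : ℕ → ℕ, StrictMono σ ∧ ∀ j, ∃ l, Tendsto (fun n => G (σ n) j) atTop (𝓝 l) := by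
  obtain ⟨l, -, σ, hσ, hl⟩ := (isCompact_univ_pi fun _ : ℕ => isCompact_closedBall (0 : ℂ) M)
    |>.tendsto_subseq (x := G) fun n => by simpa [mem_univ_pi] using hG n
  exact ⟨σ, hσ, fun j => ⟨l j, tendsto_pi_nhds.mp hl j⟩⟩

theorem cauchySeq_apply_of_denseRange {U : Set ℂ} (hU : IsOpen U) {F : ℕ → ℂ → ℂ} {M : ℝ}
    (hF : ∀ n, DifferentiableOn ℂ (F n) U) (hM : ∀ n, ∀ z ∈ U, ‖F n z‖ ≤ M) {u : ℕ → U}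
    (hu : DenseRange u) (hFu : ∀ j, CauchySeq fun n => F n (u j)) {z : ℂ} (hz : z ∈ U) :
    CauchySeq fun n => F n z := by
  obtain ⟨R, hR, hzR⟩ := Metric.isOpen_iff.mp hU z hz
  rw [Metric.cauchySeq_iff]
  intro ε hε
  set L := 2 * M / R
  have hL : 0 ≤ L := div_nonneg (mul_nonneg zero_le_two ((norm_nonneg _).trans (hM 0 z hz)))
    hR.le
  set η := min R (ε / (3 * (L + 1)))
  have hη : 0 < η := lt_min hR (by positivity)
  have hLη : L * η < ε / 3 := calc
    L * η ≤ L * (ε / (3 * (L + 1))) := by gcongr; exact min_le_right _ _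
    _ < (L + 1) * (ε / (3 * (L + 1))) := by gcongr; linarith
    _ = ε / 3 := by field_simp
  obtain ⟨j, hj⟩ := hu.exists_dist_lt ⟨z, hz⟩ hη
  have hjR : (u j : ℂ) ∈ ball z R := by
    rw [mem_ball, dist_comm]; exact hj.trans_le (min_le_left _ _)
  have hnear : ∀ n, dist (F n (u j)) (F n z) < ε / 3 := fun n =>
    calc dist (F n (u j)) (F n z) ≤ L * dist (u j : ℂ) z :=
          dist_le_of_norm_le_of_ball_subset (hF n) (hM n) hzR hjR
      _ ≤ L * η := by gcongr; rw [dist_comm]; exact hj.le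
      _ < ε / 3 := hLη
  obtain ⟨N, hN⟩ := Metric.cauchySeq_iff.mp (hFu j) (ε / 3) (by positivity)
  refine ⟨N, fun m hm n hn => ?_⟩
  calc dist (F m z) (F n z)
      ≤ dist (F m z) (F m (u j)) + dist (F m (u j)) (F n (u j)) + dist (F n (u j)) (F n z) :=
        dist_triangle4 _ _ _ _
    _ < ε / 3 + ε / 3 + ε / 3 := by
        gcongr
        · rw [dist_comm]; exact hnear _
        · exact hN m hm n hn
        · exact hnear _
    _ = ε := by ring

theorem exists_subseq_tendstoUniformlyOn {U : Set ℂ} (hU : IsOpen U) {F : ℕ → ℂ → ℂ} {M : ℝ}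
    (hF : ∀ n, DifferentiableOn ℂ (F n) U) (hM : ∀ n, ∀ z ∈ U, ‖F n z‖ ≤ M) :
    ∃ σ : ℕ → ℕ, StrictMono σ ∧ ∃ ψ : ℂ → ℂ,
      ∀ K ⊆ U, IsCompact K → TendstoUniformlyOn (fun n => F (σ n)) ψ atTop K := by
  rcases U.eq_empty_or_nonempty with rfl | hUne
  · exact ⟨id, strictMono_id, 0, fun K hK _ => by
      rw [subset_empty_iff.mp hK]; exact tendstoUniformlyOn_empty⟩
  have := hUne.to_subtype
  set u := TopologicalSpace.denseSeq U
  obtain ⟨σ, hσ, hconv⟩ :=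
    exists_strictMono_forall_tendsto (fun n j => F n (u j)) fun n j => hM n _ (u j).2
  have hcauchy : ∀ z ∈ U, CauchySeq fun n => F (σ n) z :=
    fun z hz => cauchySeq_apply_of_denseRange hU (fun n => hF (σ n)) (fun n => hM (σ n))
      (TopologicalSpace.denseRange_denseSeq U)
      (fun j => (hconv j).choose_spec.cauchySeq) hz
  refine ⟨σ, hσ, fun z => limUnder atTop fun n => F (σ n) z, fun K hKU hK => ?_⟩
  exact tendstoUniformlyOn_of_tendsto_of_norm_le hU hK hKU
    (Eventually.of_forall fun n => ⟨hF (σ n), hM (σ n)⟩)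
    fun z hz => (hcauchy z (hKU hz)).tendsto_limUnder

end Montel

section Hurwitz

theorem norm_lt_of_forall_norm_le {U : Set ℂ} (hU : IsOpen U) (hUc : IsPreconnected U)
    {f : ℂ → ℂ} (hf : DifferentiableOn ℂ f U) {C : ℝ} (hC : ∀ z ∈ U, ‖f z‖ ≤ C)
    (hnc : ∀ c, ∃ z ∈ U, f z ≠ c) : ∀ z ∈ U, ‖f z‖ < C := by
  intro z hz
  by_contra! hCz
  have hmax : IsMaxOn (norm ∘ f) U z := fun y hy => (hC y hy).trans hCz
  obtain ⟨y, hy, hfy⟩ := hnc (f z)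
  exact hfy (Complex.eqOn_of_isPreconnected_of_isMaxOn_norm hUc hU hf hz hmax hy)

theorem exists_eq_zero_of_norm_lt_of_sphere {g : ℂ → ℂ} {c : ℂ} {ρ m : ℝ} (hρ : 0 < ρ)
    (hg : DiffContOnCl ℂ g (ball c ρ)) (hsph : ∀ z ∈ sphere c ρ, m ≤ ‖g z‖) (hc : ‖g c‖ < m) :
    ∃ z ∈ ball c ρ, g z = 0 := by
  by_contra! h
  have hne : ∀ z ∈ closure (ball c ρ), g z ≠ 0 := by
    rw [closure_ball c hρ.ne', ← ball_union_sphere]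
    rintro z (hz | hz)
    · exact h z hz
    · exact norm_pos_iff.mp ((norm_nonneg _).trans_lt (hc.trans_le (hsph z hz)))
  have hm : 0 < m := (norm_nonneg _).trans_lt hc
  have hinv : ‖(g c)⁻¹‖ ≤ m⁻¹ := by
    refine Complex.norm_le_of_forall_mem_frontier_norm_le isBounded_ball (hg.inv hne)
      (fun z hz => ?_) (subset_closure (mem_ball_self hρ))
    rw [frontier_ball c hρ.ne'] at hz
    simpa using inv_anti₀ hm (hsph z hz)
  rw [norm_inv] at hinv
  exact hc.not_ge ((inv_le_inv₀ (norm_pos_iff.mpr (h c (mem_ball_self hρ))) hm).mp hinv)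

theorem exists_sphere_le_norm_sub {U : Set ℂ} (hU : IsOpen U) (hUc : IsPreconnected U)
    {ψ : ℂ → ℂ} (hψ : DifferentiableOn ℂ ψ U) {z₀ : ℂ} (hz₀ : z₀ ∈ U)
    (hnc : ∃ z ∈ U, ψ z ≠ ψ z₀) {ε : ℝ} (hε : 0 < ε) :
    ∃ ρ ∈ Ioo 0 ε, closedBall z₀ ρ ⊆ U ∧ ∃ m > 0, ∀ z ∈ sphere z₀ ρ, m ≤ ‖ψ z - ψ z₀‖ := by
  have hψa : AnalyticOnNhd ℂ (fun z => ψ z - ψ z₀) U := (hψ.sub_const _).analyticOnNhd hU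
  have hiso : ∀ᶠ z in 𝓝[≠] z₀, ψ z - ψ z₀ ≠ 0 := by
    refine (hψa z₀ hz₀).eventually_eq_zero_or_eventually_ne_zero.resolve_left fun h => ?_
    obtain ⟨z, hz, hψz⟩ := hnc
    exact hψz (sub_eq_zero.mp (hψa.eqOn_zero_of_preconnected_of_eventuallyEq_zero hUc hz₀ h hz))
  obtain ⟨ρ₀, hρ₀, hiso⟩ := Metric.eventually_nhds_iff.mp (eventually_nhdsWithin_iff.mp hiso)
  obtain ⟨R, hR, hRU⟩ := Metric.isOpen_iff.mp hU z₀ hz₀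
  set ρ := min ρ₀ (min ε R) / 2 with hρdef
  have hρ : 0 < ρ := by positivity
  have hρ₀ : ρ < ρ₀ := by linarith [hρdef, min_le_left ρ₀ (min ε R)]
  have hρε : ρ < ε := by linarith [hρdef, min_le_right ρ₀ (min ε R), min_le_left ε R]
  have hρR : ρ < R := by linarith [hρdef, min_le_right ρ₀ (min ε R), min_le_right ε R]
  have hball : closedBall z₀ ρ ⊆ U := (closedBall_subset_ball hρR).trans hRU
  obtain ⟨x, hx, hxmin⟩ := (isCompact_sphere z₀ ρ).exists_isMinOn
    (NormedSpace.sphere_nonempty.mpr hρ.le)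
    ((hψ.continuousOn.mono (sphere_subset_closedBall.trans hball)).sub continuousOn_const).norm
  have hx₀ : x ≠ z₀ := ne_of_mem_sphere hx hρ.ne'
  refine ⟨ρ, ⟨hρ, hρε⟩, hball, ‖ψ x - ψ z₀‖, norm_pos_iff.mpr ?_, fun z hz => hxmin hz⟩
  exact hiso (by rw [mem_sphere.mp hx]; exact hρ₀) hx₀

theorem eventually_exists_eq_of_tendstoUniformlyOn {ι : Type*} {l : Filter ι} {U : Set ℂ}
    (hU : IsOpen U) (hUc : IsPreconnected U) {F : ι → ℂ → ℂ} {ψ : ℂ → ℂ}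
    (hF : ∀ i, DifferentiableOn ℂ (F i) U) (hψ : DifferentiableOn ℂ ψ U)
    (hconv : ∀ K ⊆ U, IsCompact K → TendstoUniformlyOn F ψ l K)
    {z₀ : ℂ} (hz₀ : z₀ ∈ U) (hnc : ∃ z ∈ U, ψ z ≠ ψ z₀) {ε : ℝ} (hε : 0 < ε) :
    ∀ᶠ i in l, ∃ z ∈ ball z₀ ε ∩ U, F i z = ψ z₀ := by
  obtain ⟨ρ, ⟨hρ, hρε⟩, hball, m, hm, hsph⟩ := exists_sphere_le_norm_sub hU hUc hψ hz₀ hnc hε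
  filter_upwards [Metric.tendstoUniformlyOn_iff.mp (hconv _ hball (isCompact_closedBall z₀ ρ))
    (m / 2) (by positivity)] with i hi
  have hclose : ∀ z ∈ closedBall z₀ ρ, ‖F i z - ψ z₀ - (ψ z - ψ z₀)‖ < m / 2 := fun z hz => by
    rw [sub_sub_sub_cancel_right, ← dist_eq_norm, dist_comm]; exact hi z hz
  obtain ⟨z, hz, hFz⟩ := exists_eq_zero_of_norm_lt_of_sphere hρ
    (((hF i).sub_const (ψ z₀)).diffContOnCl_ball hball) (m := m / 2)
    (fun z hz => by
      linarith [norm_sub_norm_le (ψ z - ψ z₀) (F i z - ψ z₀),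
        norm_sub_rev (ψ z - ψ z₀) (F i z - ψ z₀), hsph z hz,
        hclose z (sphere_subset_closedBall hz)])
    (by simpa using hclose z₀ (mem_closedBall_self hρ.le))
  exact ⟨z, ⟨ball_subset_ball hρε.le hz, hball (ball_subset_closedBall hz)⟩, sub_eq_zero.mp hFz⟩

variable {ι : Type*} {l : Filter ι} [l.NeBot] {U : Set ℂ} {F : ι → ℂ → ℂ} {ψ : ℂ → ℂ}

theorem ne_of_tendstoUniformlyOn (hU : IsOpen U) (hUc : IsPreconnected U)
    (hF : ∀ i, DifferentiableOn ℂ (F i) U) (hψ : DifferentiableOn ℂ ψ U)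
    (hconv : ∀ K ⊆ U, IsCompact K → TendstoUniformlyOn F ψ l K)
    (hnc : ∀ c, ∃ z ∈ U, ψ z ≠ c) {w : ℂ} (hw : ∀ i, ∀ z ∈ U, F i z ≠ w) :
    ∀ z ∈ U, ψ z ≠ w := by
  rintro z hz rfl
  obtain ⟨i, a, ⟨-, ha⟩, hFa⟩ :=
    (eventually_exists_eq_of_tendstoUniformlyOn hU hUc hF hψ hconv hz (hnc _) one_pos).exists
  exact hw i a ha hFa

theorem injOn_of_tendstoUniformlyOn (hU : IsOpen U) (hUc : IsPreconnected U)
    (hF : ∀ i, DifferentiableOn ℂ (F i) U) (hψ : DifferentiableOn ℂ ψ U)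
    (hconv : ∀ K ⊆ U, IsCompact K → TendstoUniformlyOn F ψ l K)
    (hnc : ∀ c, ∃ z ∈ U, ψ z ≠ c) (hinj : ∀ i, InjOn (F i) U) : InjOn ψ U := by
  intro z₁ hz₁ z₂ hz₂ hψz
  by_contra hne
  have hε : 0 < dist z₁ z₂ / 2 := by have := dist_pos.mpr hne; positivity
  obtain ⟨i, ⟨a, ⟨ha, haU⟩, hFa⟩, ⟨b, ⟨hb, hbU⟩, hFb⟩⟩ :=
    ((eventually_exists_eq_of_tendstoUniformlyOn hU hUc hF hψ hconv hz₁ (hnc _) hε).and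
      (eventually_exists_eq_of_tendstoUniformlyOn hU hUc hF hψ hconv hz₂ (hnc _) hε)).exists
  have hab : a = b := hinj i haU hbU (by rw [hFa, hFb, hψz])
  rw [hab, mem_ball] at ha
  linarith [dist_triangle z₁ b z₂, dist_comm z₁ b, mem_ball.mp hb]

end Hurwitz

theorem injOn_ball_of_norm_sub_le {f : ℂ → ℂ} {c : ℂ} {R η : ℝ}
    (hf : DifferentiableOn ℂ f (ball c R)) (hη : ∀ z ∈ ball c R, ‖f z - z‖ ≤ η)
    (hηR : 4 * η < R) : InjOn f (ball c (R / 4)) := by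
  intro a ha b hb hab
  rw [mem_ball] at ha hb
  have hR : 0 < R := by linarith [dist_nonneg.trans_lt ha]
  have hsub : ball b (R / 2) ⊆ ball c R := fun z hz => by
    rw [mem_ball] at hz ⊢; linarith [dist_triangle z b c]
  have hlip := dist_le_of_norm_le_of_ball_subset (f := fun z => f z - z) (y := a)
    (hf.sub differentiableOn_id) hη hsub
    (by rw [mem_ball]; linarith [dist_triangle a c b, dist_comm b c])
  rw [dist_eq_norm, dist_eq_norm, show f a - a - (f b - b) = -(a - b) by rw [hab]; ring,
    norm_neg] at hlip
  have hcontr : 2 * η / (R / 2) < 1 := by rw [div_lt_one (by positivity)]; linarith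
  have : ‖a - b‖ = 0 := by nlinarith [norm_nonneg (a - b)]
  exact sub_eq_zero.mp (norm_eq_zero.mp this)

section Winding

theorem hasWindingNumber_congr {α β : ℝ → ℂ} (h : EqOn α β (Icc 0 1)) {w : ℂ} {n : ℤ} :
    HasWindingNumber α w n ↔ HasWindingNumber β w n := by
  constructor <;> rintro ⟨g, hg, hexp, hn⟩
  · exact ⟨g, hg, fun t ht => h ht ▸ hexp t ht, hn⟩
  · exact ⟨g, hg, fun t ht => (h ht).symm ▸ hexp t ht, hn⟩

/-- Dog-on-a-leash: a lift of `β` is the lift of `α` plus the principal logarithm of `β / α`,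
which stays in the disk of radius one around `1`. -/
theorem HasWindingNumber.of_norm_sub_lt {α β : ℝ → ℂ} {n : ℤ} (h : HasWindingNumber α 0 n)
    (hβ : ContinuousOn β (Icc 0 1)) (hα₁ : α 0 = α 1) (hβ₁ : β 0 = β 1)
    (hαβ : ∀ x ∈ Icc (0 : ℝ) 1, ‖β x - α x‖ < ‖α x‖) : HasWindingNumber β 0 n := by
  obtain ⟨g, hg, hexp, hn⟩ := h
  simp only [sub_zero] at hexp
  have hα : ContinuousOn α (Icc 0 1) :=
    (Complex.continuous_exp.comp_continuousOn hg).congr fun x hx => hexp x hx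
  have hα₀ : ∀ x ∈ Icc (0 : ℝ) 1, α x ≠ 0 := fun x hx => by
    rw [hexp x hx]; exact Complex.exp_ne_zero _
  have hslit : ∀ x ∈ Icc (0 : ℝ) 1, β x / α x ∈ Complex.slitPlane := fun x hx => by
    have hlt : ‖(β x - α x) / α x‖ < 1 := by
      rw [norm_div, div_lt_one (norm_pos_iff.mpr (hα₀ x hx))]; exact hαβ x hx
    simpa [sub_div, div_self (hα₀ x hx)] using Complex.mem_slitPlane_of_norm_lt_one hlt
  have hq : ContinuousOn (fun x => Complex.log (β x / α x)) (Icc 0 1) := fun x hx =>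
    (continuousAt_clog (hslit x hx)).comp_continuousWithinAt (f := fun y => β y / α y)
      ((hβ x hx).div (hα x hx) (hα₀ x hx))
  refine ⟨fun x => g x + Complex.log (β x / α x), hg.add hq, fun x hx => ?_, ?_⟩
  · rw [sub_zero, Complex.exp_add, ← hexp x hx,
      Complex.exp_log (div_ne_zero (fun h0 => by simpa [h0] using hαβ x hx) (hα₀ x hx)),
      mul_div_cancel₀ _ (hα₀ x hx)]
  · simp only [hα₁, hβ₁, ← hn]; ring

theorem eventually_hasWindingNumber_iff {ι : Type*} {l : Filter ι} {α : ℝ → ℂ}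
    {C : ι → ℝ → ℂ} (hα : ContinuousOn α (Icc 0 1)) (hα₁ : α 0 = α 1)
    (hα₀ : ∀ x ∈ Icc (0 : ℝ) 1, α x ≠ 0)
    (hC : ∀ᶠ i in l, ContinuousOn (C i) (Icc 0 1) ∧ C i 0 = C i 1)
    (hCα : TendstoUniformlyOn C α l (Icc 0 1)) :
    ∀ᶠ i in l, ∀ n : ℤ, HasWindingNumber (C i) 0 n ↔ HasWindingNumber α 0 n := by
  obtain ⟨x₀, hx₀, hmin⟩ :=
    isCompact_Icc.exists_isMinOn (nonempty_Icc.mpr zero_le_one) hα.norm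
  have hm : 0 < ‖α x₀‖ := norm_pos_iff.mpr (hα₀ x₀ hx₀)
  filter_upwards [hC, Metric.tendstoUniformlyOn_iff.mp hCα (‖α x₀‖ / 2) (by positivity)]
    with i ⟨hCi, hCi₁⟩ hi n
  have hclose : ∀ x ∈ Icc (0 : ℝ) 1, ‖C i x - α x‖ < ‖α x₀‖ / 2 := fun x hx => by
    rw [← dist_eq_norm, dist_comm]; exact hi x hx
  have hlow : ∀ x ∈ Icc (0 : ℝ) 1, ‖α x₀‖ ≤ ‖α x‖ := fun x hx => hmin hx
  constructor <;> intro h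
  · refine h.of_norm_sub_lt hα hCi₁ hα₁ fun x hx => ?_
    rw [norm_sub_rev]
    linarith [hclose x hx, hlow x hx, norm_sub_norm_le (α x) (C i x),
      norm_sub_rev (α x) (C i x)]
  · exact h.of_norm_sub_lt hCi hα₁ hCi₁ fun x hx => by linarith [hclose x hx, hlow x hx]

theorem eventually_hasWindingNumber_comp_iff {ι : Type*} {l : Filter ι} {U : Set ℂ}
    {F : ι → ℂ → ℂ} {f : ℂ → ℂ} (hF : ∀ᶠ i in l, ContinuousOn (F i) U) (hf : ContinuousOn f U)
    (hf₀ : ∀ z ∈ U, f z ≠ 0) (hFf : ∀ K ⊆ U, IsCompact K → TendstoUniformlyOn F f l K)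
    {γ : ℝ → ℂ} (hγ : IsClosedCurveIn γ U) :
    ∀ᶠ i in l, ∀ n : ℤ,
      HasWindingNumber (fun x => F i (γ x)) 0 n ↔ HasWindingNumber (fun x => f (γ x)) 0 n := by
  obtain ⟨hγc, hγ₁, hγU⟩ := hγ
  have hγU' : MapsTo γ (Icc 0 1) U := fun x hx => hγU x hx
  exact eventually_hasWindingNumber_iff (hf.comp hγc hγU') (congrArg f hγ₁)
    (fun x hx => hf₀ _ (hγU x hx)) (hF.mono fun i hi => ⟨hi.comp hγc hγU', congrArg _ hγ₁⟩)
    (((hFf _ (image_subset_iff.mpr hγU') (isCompact_Icc.image_of_continuousOn hγc)).comp γ).mono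
      (subset_preimage_image γ _))

end Winding

theorem exists_first_eq_of_continuousOn {X : Type*} [TopologicalSpace X] [T2Space X]
    {f g : ℝ → X} {a b : ℝ} (hab : a ≤ b) (hf : ContinuousOn f (Icc a b))
    (hg : ContinuousOn g (Icc a b)) (hb : f b = g b) :
    ∃ c ∈ Icc a b, f c = g c ∧ ∀ u ∈ Ico a c, f u ≠ g u := by
  set S := Icc a b ∩ (fun x => (f x, g x)) ⁻¹' {p | p.1 = p.2}
  have hS : IsClosed S :=
    (hf.prodMk hg).preimage_isClosed_of_isClosed isClosed_Icc isClosed_diagonal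
  have hbdd : BddBelow S := ⟨a, fun x hx => hx.1.1⟩
  obtain ⟨hc, hfgc⟩ := hS.csInf_mem ⟨b, ⟨hab, le_rfl⟩, hb⟩ hbdd
  refine ⟨sInf S, hc, hfgc, fun u hu hfgu => hu.2.not_ge (csInf_le hbdd ⟨?_, hfgu⟩)⟩
  exact ⟨hu.1, hu.2.le.trans hc.2⟩

namespace IsEvolutionFamily

variable {d : ℝ≥0∞} {D : CanonicalDomainSystem d} {φ : ℝ → ℝ → ℂ → ℂ}

theorem norm_lt_one (hφ : IsEvolutionFamily d D φ) {s t : ℝ} (hs : 0 ≤ s) (hst : s ≤ t) {z : ℂ}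
    (hz : z ∈ stdAnnulus (D.r s)) : ‖φ s t z‖ < 1 :=
  (hφ.mapsTo hs hst hz).2

theorem ne_zero (hφ : IsEvolutionFamily d D φ) {s t : ℝ} (hs : 0 ≤ s) (hst : s ≤ t) {z : ℂ}
    (hz : z ∈ stdAnnulus (D.r s)) : φ s t z ≠ 0 :=
  ne_zero_of_mem_stdAnnulus (D.r_nonneg t (hs.trans hst)) (hφ.mapsTo hs hst hz)

theorem continuousOn_time (hφ : IsEvolutionFamily d D φ) (hd : 1 ≤ d) {s : ℝ} (hs : 0 ≤ s)
    {z : ℂ} (hz : z ∈ stdAnnulus (D.r s)) : ContinuousOn (fun t => φ s t z) (Ici s) := by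
  refine continuousOn_Ici_of_forall_Icc fun T => ?_
  rcases lt_or_ge T s with hT | hsT
  · simp [Icc_eq_empty_of_lt hT]
  obtain ⟨k, -, hk, hbound⟩ := hφ.ef3 s T hs hsT z hz
  exact continuousOn_of_dist_le_integral (hk.integrableOn_Icc hd) fun u hu v hv huv => by
    rw [dist_eq_norm]; exact hbound s u v le_rfl hu.1 huv hv.2

theorem tendsto_nhdsLT_time (hφ : IsEvolutionFamily d D φ) (hd : 1 ≤ d) {s c : ℝ} (hs : 0 ≤ s)
    (hsc : s < c) {z : ℂ} (hz : z ∈ stdAnnulus (D.r s)) :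
    Tendsto (fun t => φ s t z) (𝓝[<] c) (𝓝 (φ s c z)) := by
  rw [← nhdsWithin_Ico_eq_nhdsLT hsc]
  exact (hφ.continuousOn_time hd hs hz c hsc.le).mono_left
    (nhdsWithin_mono _ Ico_subset_Ici_self)

theorem tendsto_nhdsLT_initial (hφ : IsEvolutionFamily d D φ) (hd : 1 ≤ d) {S c : ℝ}
    (hS : 0 ≤ S) (hSc : S < c) {p : ℂ} (hp : p ∈ stdAnnulus (D.r S)) :
    Tendsto (fun u => φ u c p) (𝓝[<] c) (𝓝 p) := by
  obtain ⟨k, -, hk, hbound⟩ := hφ.ef3 S c hS hSc.le p hp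
  have hint : ContinuousOn (fun u => ∫ ξ in u..c, k ξ) (Icc S c) := by
    have := intervalIntegral.continuousOn_primitive_interval_left (f := k) (μ := volume)
      (by rw [uIcc_of_le hSc.le]; exact hk.integrableOn_Icc hd)
    rwa [uIcc_of_le hSc.le] at this
  have hzero : Tendsto (fun u => ∫ ξ in u..c, k ξ) (𝓝[<] c) (𝓝 0) := by
    rw [← nhdsWithin_Ico_eq_nhdsLT hSc]
    simpa using (hint c ⟨hSc.le, le_rfl⟩).mono_left (nhdsWithin_mono _ Ico_subset_Icc_self)
  refine tendsto_iff_dist_tendsto_zero.mpr <| squeeze_zero' (Eventually.of_forall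
    fun _ => dist_nonneg) ?_ hzero
  filter_upwards [Ioo_mem_nhdsLT hSc] with u hu
  have hpu : p ∈ stdAnnulus (D.r u) := D.stdAnnulus_subset hS hu.1.le hp
  calc dist (φ u c p) p = ‖φ u u p - φ u c p‖ := by
        rw [hφ.ef1 u (hS.trans hu.1.le) p hpu, dist_comm, dist_eq_norm]
    _ ≤ ∫ ξ in u..c, k ξ := hbound u u c hu.1.le le_rfl hu.2.le le_rfl

theorem tendstoUniformlyOn_time (hφ : IsEvolutionFamily d D φ) (hd : 1 ≤ d) {s c : ℝ}
    (hs : 0 ≤ s) (hsc : s ≤ c) {K : Set ℂ} (hK : IsCompact K) (hKs : K ⊆ stdAnnulus (D.r s)) :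
    TendstoUniformlyOn (fun u => φ s u) (φ s c) (𝓝[Ici s] c) K :=
  tendstoUniformlyOn_of_tendsto_of_norm_le (isOpen_stdAnnulus _) hK hKs (M := 1)
    (eventually_nhdsWithin_of_forall fun _ hu =>
      ⟨hφ.holo hs hu, fun _ hz => (hφ.norm_lt_one hs hu hz).le⟩)
    fun _ hz => hφ.continuousOn_time hd hs (hKs hz) c hsc

/-- `φ_{u,c}` converges to the identity near `w` as `u ↑ c`. -/
theorem eventually_injOn_ball (hφ : IsEvolutionFamily d D φ) (hd : 1 ≤ d) {c : ℝ} (hc : 0 < c)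
    {w : ℂ} (hw : w ∈ stdAnnulus (D.r c)) : ∃ ρ > 0, ∀ᶠ u in 𝓝[<] c, InjOn (φ u c) (ball w ρ) := by
  obtain ⟨R, hR, hball⟩ := D.exists_ball_subset hd hc.le hw
  have hball' : ∀ᶠ u in 𝓝[<] c, ball w R ⊆ stdAnnulus (D.r u) := by
    rw [← nhdsWithin_Ico_eq_nhdsLT hc]
    exact nhdsWithin_mono _ Ico_subset_Ici_self hball
  have hgood : ∀ᶠ u in 𝓝[<] c, ball w R ⊆ stdAnnulus (D.r u) ∧ 0 ≤ u ∧ u < c :=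
    hball'.and (Eventually.mono (Ioo_mem_nhdsLT hc) fun u hu => ⟨hu.1.le, hu.2⟩)
  obtain ⟨u₀, hu₀, h0u₀, hu₀c⟩ := hgood.exists
  have hnear : TendstoUniformlyOn (fun u z => φ u c z - z) 0 (𝓝[<] c) (closedBall w (R / 2)) :=
    tendstoUniformlyOn_of_tendsto_of_norm_le isOpen_ball (isCompact_closedBall w _)
      (closedBall_subset_ball (half_lt_self hR)) (M := 2)
      (hgood.mono fun u ⟨hu, h0u, huc⟩ => ⟨((hφ.holo h0u huc.le).mono hu).sub differentiableOn_id,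
        fun z hz => by
          linarith [norm_sub_le (φ u c z) z, (hφ.norm_lt_one h0u huc.le (hu hz)).le, (hu hz).2]⟩)
      fun p hp => by
        simpa using (hφ.tendsto_nhdsLT_initial hd h0u₀ hu₀c
          (hu₀ (closedBall_subset_ball (half_lt_self hR) hp))).sub_const p
  refine ⟨R / 8, by positivity, ?_⟩
  filter_upwards [hgood, Metric.tendstoUniformlyOn_iff.mp hnear (R / 16) (by positivity)]
    with u ⟨hu, h0u, huc⟩ hclose
  have := injOn_ball_of_norm_sub_le (f := φ u c) (c := w) (R := R / 2) (η := R / 16)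
    ((hφ.holo h0u huc.le).mono ((ball_subset_ball (half_le_self hR.le)).trans hu))
    (fun z hz => by
      simpa [dist_eq_norm, norm_sub_rev] using (hclose z (ball_subset_closedBall hz)).le)
    (by linarith)
  rwa [show R / 2 / 4 = R / 8 by ring] at this

theorem injOn (hφ : IsEvolutionFamily d D φ) (hd : 1 ≤ d) {s t : ℝ} (hs : 0 ≤ s) (hst : s ≤ t) :
    InjOn (φ s t) (stdAnnulus (D.r s)) := by
  intro z₁ hz₁ z₂ hz₂ heq
  by_contra hne
  obtain ⟨c, ⟨hsc, -⟩, hcoinc, hfirst⟩ := exists_first_eq_of_continuousOn hst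
    ((hφ.continuousOn_time hd hs hz₁).mono Icc_subset_Ici_self)
    ((hφ.continuousOn_time hd hs hz₂).mono Icc_subset_Ici_self) heq
  have hsc : s < c := hsc.lt_of_ne <| by
    rintro rfl
    exact hne (by rwa [hφ.ef1 s hs z₁ hz₁, hφ.ef1 s hs z₂ hz₂] at hcoinc)
  obtain ⟨ρ, hρ, hinj⟩ := hφ.eventually_injOn_ball hd (hs.trans_lt hsc) (hφ.mapsTo hs hsc.le hz₁)
  have hz₂' := hφ.tendsto_nhdsLT_time hd hs hsc hz₂
  rw [← hcoinc] at hz₂'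
  obtain ⟨u, hinju, ha, hb, hsu, huc⟩ := (hinj.and <|
    ((hφ.tendsto_nhdsLT_time hd hs hsc hz₁).eventually (ball_mem_nhds _ hρ)).and <|
    (hz₂'.eventually (ball_mem_nhds _ hρ)).and (Ioo_mem_nhdsLT hsc)).exists
  refine hfirst u ⟨hsu.le, huc⟩ (hinju ha hb ?_)
  rw [← hφ.ef2 hs hsu.le huc.le z₁ hz₁, ← hφ.ef2 hs hsu.le huc.le z₂ hz₂, hcoinc]

theorem hasWindingNumber_comp_iff (hφ : IsEvolutionFamily d D φ) (hd : 1 ≤ d) {s t : ℝ}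
    (hs : 0 ≤ s) (hst : s ≤ t) {γ : ℝ → ℂ} (hγ : IsClosedCurveIn γ (stdAnnulus (D.r s))) (n : ℤ) :
    HasWindingNumber (fun x => φ s t (γ x)) 0 n ↔ HasWindingNumber γ 0 n := by
  set C : ℝ → ℝ → ℂ := fun u x => φ s u (γ x)
  have hlocal : ∀ c ∈ Ici s, ∀ᶠ u in 𝓝[Ici s] c,
      ∀ m : ℤ, HasWindingNumber (C c) 0 m ↔ HasWindingNumber (C u) 0 m := fun c hc =>
    (eventually_hasWindingNumber_comp_iff
      (eventually_nhdsWithin_of_forall fun u hu => (hφ.holo hs hu).continuousOn)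
      (hφ.holo hs hc).continuousOn (fun z hz => hφ.ne_zero hs hc hz)
      (fun K hKs hK => hφ.tendstoUniformlyOn_time hd hs hc hK hKs) hγ).mono
      fun u hu m => (hu m).symm
  have hconst := isPreconnected_Ici.induction₂
    (fun u v => ∀ m : ℤ, HasWindingNumber (C u) 0 m ↔ HasWindingNumber (C v) 0 m) hlocal
    (fun _ _ _ _ _ _ h₁ h₂ m => (h₁ m).trans (h₂ m)) (fun _ _ _ _ h m => (h m).symm)
    self_mem_Ici hst
  rw [← hconst n]
  exact hasWindingNumber_congr fun x hx => hφ.ef1 s hs (γ x) (hγ.2.2 x hx)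

end IsEvolutionFamily

/-- Lemma 4.3 (i): normal-family behaviour of an evolution family — any
sequence `φ_{s,t_n}` has a subsequence converging locally uniformly either to a
constant or to a winding-preserving injective holomorphic map into `𝔻*`. -/
theorem evolutionFamily_normal_limits
    (d : ℝ≥0∞) (hd : 1 ≤ d) (D : CanonicalDomainSystem d) (φ : ℝ → ℝ → ℂ → ℂ)
    (hφ : IsEvolutionFamily d D φ) (s : ℝ) (hs : 0 ≤ s)
    (t : ℕ → ℝ) (ht : ∀ n, s ≤ t n) :
    ∃ σ : ℕ → ℕ, StrictMono σ ∧ ∃ ψ : ℂ → ℂ,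
      (∀ K : Set ℂ, IsCompact K → K ⊆ stdAnnulus (D.r s) →
        TendstoUniformlyOn (fun n z => φ s (t (σ n)) z) ψ atTop K) ∧
      ((∃ c : ℂ, ∀ z ∈ stdAnnulus (D.r s), ψ z = c) ∨
        (DifferentiableOn ℂ ψ (stdAnnulus (D.r s)) ∧ InjOn ψ (stdAnnulus (D.r s)) ∧
          MapsTo ψ (stdAnnulus (D.r s)) (stdAnnulus 0) ∧
          PreservesWinding ψ (stdAnnulus (D.r s)))) := by
  set A := stdAnnulus (D.r s)
  have hA : IsOpen A := isOpen_stdAnnulus _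
  have hAc : IsPreconnected A := isPreconnected_stdAnnulus (D.r_nonneg s hs)
  have hF : ∀ n, DifferentiableOn ℂ (φ s (t n)) A := fun n => hφ.holo hs (ht n)
  obtain ⟨σ, hσ, ψ, hconv⟩ := exists_subseq_tendstoUniformlyOn hA hF (M := 1)
    fun n z hz => (hφ.norm_lt_one hs (ht n) hz).le
  refine ⟨σ, hσ, ψ, fun K hK hKA => hconv K hKA hK, ?_⟩
  by_cases hconst : ∃ c, ∀ z ∈ A, ψ z = c
  · exact Or.inl hconst
  push Not at hconst
  have hψ : DifferentiableOn ℂ ψ A :=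
    ((tendstoLocallyUniformlyOn_iff_forall_isCompact hA).mpr hconv).differentiableOn
      (Eventually.of_forall fun n => hF (σ n)) hA
  have hψ₀ : ∀ z ∈ A, ψ z ≠ 0 := ne_of_tendstoUniformlyOn hA hAc (fun n => hF (σ n)) hψ hconv
    hconst fun n z hz => hφ.ne_zero hs (ht (σ n)) hz
  have hψ₁ : ∀ z ∈ A, ‖ψ z‖ < 1 := norm_lt_of_forall_norm_le hA hAc hψ (fun z hz =>
    le_of_tendsto
      ((hconv {z} (singleton_subset_iff.mpr hz) isCompact_singleton).tendsto_at rfl).norm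
      (Eventually.of_forall fun n => (hφ.norm_lt_one hs (ht (σ n)) hz).le)) hconst
  refine Or.inr ⟨hψ, injOn_of_tendstoUniformlyOn hA hAc (fun n => hF (σ n)) hψ hconv hconst
    fun n => hφ.injOn hd hs (ht (σ n)), fun z hz => ⟨norm_pos_iff.mpr (hψ₀ z hz), hψ₁ z hz⟩, ?_⟩
  intro γ hγ n
  obtain ⟨m, hm⟩ := (eventually_hasWindingNumber_comp_iff
    (Eventually.of_forall fun m => (hF (σ m)).continuousOn) hψ.continuousOn hψ₀ hconv hγ).exists
  rw [← hm n, hφ.hasWindingNumber_comp_iff hd hs (ht (σ m)) hγ]
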